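/- Let H ∈ (0,1/2) and 0 < s < t ≤ T. Then C_H Γ(H+1/2) s^{1/2−H} (D^{1/2−H}_{T−}( u ↦ u^{H−1/2} 1_{[0,t]}(u) ))(s) = K_H(t,s). In other words, the operator K defined by (Kφ)(s) = C_H Γ(H+1/2) s^{1/2−H} (D^{1/2−H}_{T−}(u^{H−1/2}φ(u)))(s) satisfies K(1_{[0,t]}) = K_H(t,·)1_{[0,t]} on (0,t). -/

import Mathlib

/-
With `a = H - 1/2 ∈ (-1, 0)` the integral in `D^{-a}_{T-}` splits at `t`. On `(t, T)` the
integrand is `s^a (u - s)^{a-1}`, integrated explicitly. On `(s, t)` it is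
`(s^a - u^a) (u - s)^{a-1}`, which is integrated by parts against `(u - s)^a / a`; the boundary
term at `s` vanishes because `|s^a - u^a| = O(u - s)`. The two `(T - s)^a` terms cancel, and
`Γ(1 - α) = Γ(H + 1/2)` cancels the normalization of `K`.
-/

open MeasureTheory Set

/-- The Beta function `B(a,b) = Γ(a)Γ(b)/Γ(a+b)`. -/
noncomputable def betaFn (a b : ℝ) : ℝ := Real.Gamma a * Real.Gamma b / Real.Gamma (a + b)

/-- The normalizing constant `C_H = sqrt( 2H / ((1-2H) B(1-2H, H+1/2)) )`. -/
noncomputable def CH (H : ℝ) : ℝ :=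
  Real.sqrt (2 * H / ((1 - 2 * H) * betaFn (1 - 2 * H) (H + 1 / 2)))

/-- The fractional Brownian motion kernel `K_H(t,s)` for `H ∈ (0,1/2)`, `0 < s < t`. -/
noncomputable def fbmKernel (H t s : ℝ) : ℝ :=
  CH H * ((t / s) ^ (H - 1 / 2) * (t - s) ^ (H - 1 / 2) -
    (H - 1 / 2) * s ^ (1 / 2 - H) *
      ∫ u in Set.Ioo s t, u ^ (H - 3 / 2) * (u - s) ^ (H - 1 / 2))

/-- Right-sided fractional derivative of order `α` on `[0,T]`:
`(D^α_{T-} f)(s) = (1/Γ(1-α)) ( f(s)/(T-s)^α + α ∫_s^T (f(s)-f(u))/(u-s)^{1+α} du )`. -/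
noncomputable def fracDerRight (T α : ℝ) (f : ℝ → ℝ) (s : ℝ) : ℝ :=
  (1 / Real.Gamma (1 - α)) *
    (f s / (T - s) ^ α + α * ∫ u in Set.Ioo s T, (f s - f u) / (u - s) ^ (1 + α))

/-- The transfer operator `(Kφ)(s) = C_H Γ(H+1/2) s^{1/2-H} D^{1/2-H}_{T-}(u ↦ u^{H-1/2} φ(u))(s)`. -/
noncomputable def Kop (T H : ℝ) (φ : ℝ → ℝ) (s : ℝ) : ℝ :=
  CH H * Real.Gamma (H + 1 / 2) * s ^ (1 / 2 - H) *
    fracDerRight T (1 / 2 - H) (fun u => u ^ (H - 1 / 2) * φ u) s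

open Filter Topology

section
variable {a s t : ℝ}

lemma abs_rpow_sub_rpow_le (hs : 0 < s) (ha : a ≤ 0) {u : ℝ} (hu : s ≤ u) :
    |s ^ a - u ^ a| ≤ -a * s ^ (a - 1) * (u - s) := by
  have hderiv : ∀ x ∈ Ici s,
      HasDerivWithinAt (fun y : ℝ => y ^ a) (a * x ^ (a - 1)) (Ici s) x := fun x hx =>
    (Real.hasDerivAt_rpow_const (Or.inl (hs.trans_le hx).ne')).hasDerivWithinAt
  have hbound : ∀ x ∈ Ici s, ‖a * x ^ (a - 1)‖ ≤ -a * s ^ (a - 1) := by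
    intro x hx
    rw [norm_mul, Real.norm_of_nonpos ha,
      Real.norm_of_nonneg (Real.rpow_nonneg (hs.le.trans hx) _)]
    exact mul_le_mul_of_nonneg_left (Real.rpow_le_rpow_of_nonpos hs hx (by linarith))
      (by linarith)
  have h := (convex_Ici s).norm_image_sub_le_of_norm_hasDerivWithin_le hderiv hbound
    self_mem_Ici hu
  rwa [norm_sub_rev, Real.norm_eq_abs, Real.norm_of_nonneg (sub_nonneg.2 hu)] at h

lemma intervalIntegrable_sub_rpow (ha : -1 < a) (s t : ℝ) :
    IntervalIntegrable (fun u => (u - s) ^ a) volume s t := by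
  simpa using
    (intervalIntegral.intervalIntegrable_rpow' (a := 0) (b := t - s) ha).comp_sub_right s

lemma intervalIntegrable_rpow_mul_sub_rpow (hs : 0 < s) (ha : -1 < a) (hst : s ≤ t) (b : ℝ) :
    IntervalIntegrable (fun u => u ^ b * (u - s) ^ a) volume s t := by
  refine (intervalIntegrable_sub_rpow ha s t).continuousOn_mul ?_
  rw [uIcc_of_le hst]
  exact fun u hu =>
    (Real.continuousAt_rpow_const _ _ (Or.inl (hs.trans_le hu.1).ne')).continuousWithinAt

lemma intervalIntegrable_rpow_sub_rpow_mul_sub_rpow (hs : 0 < s) (ha₁ : -1 < a) (ha₀ : a ≤ 0)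
    (hst : s ≤ t) :
    IntervalIntegrable (fun u => (s ^ a - u ^ a) * (u - s) ^ (a - 1)) volume s t := by
  refine ((intervalIntegrable_sub_rpow ha₁ s t).const_mul (-a * s ^ (a - 1))).mono_fun' ?_ ?_
  · exact Measurable.aestronglyMeasurable (by fun_prop)
  · rw [uIoc_of_le hst]
    filter_upwards [ae_restrict_mem measurableSet_Ioc] with u hu
    have hu₀ : 0 < u - s := sub_pos.2 hu.1
    calc ‖(s ^ a - u ^ a) * (u - s) ^ (a - 1)‖
        = |s ^ a - u ^ a| * (u - s) ^ (a - 1) := by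
          rw [Real.norm_eq_abs, abs_mul, abs_of_pos (Real.rpow_pos_of_pos hu₀ _)]
      _ ≤ -a * s ^ (a - 1) * (u - s) * (u - s) ^ (a - 1) := by
          gcongr; exact abs_rpow_sub_rpow_le hs ha₀ hu.1.le
      _ = -a * s ^ (a - 1) * (u - s) ^ a := by
          rw [Real.rpow_sub_one hu₀.ne']; field_simp

lemma tendsto_rpow_sub_rpow_mul_sub_rpow_nhdsGT (hs : 0 < s) (ha₁ : -1 < a) (ha₀ : a ≤ 0) :
    Tendsto (fun u => (s ^ a - u ^ a) * (u - s) ^ a) (𝓝[>] s) (𝓝 0) := by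
  have hbound : Tendsto (fun u => -a * s ^ (a - 1) * (u - s) ^ (a + 1)) (𝓝[>] s) (𝓝 0) := by
    have hcont : ContinuousAt (fun u => -a * s ^ (a - 1) * (u - s) ^ (a + 1)) s :=
      continuousAt_const.mul
        ((continuousAt_id.sub continuousAt_const).rpow_const (Or.inr (by linarith)))
    simpa [Real.zero_rpow (show a + 1 ≠ 0 by linarith)] using
      hcont.tendsto.mono_left nhdsWithin_le_nhds
  refine squeeze_zero_norm' ?_ hbound
  filter_upwards [self_mem_nhdsWithin] with u (hu : s < u)
  have hu₀ : 0 < u - s := sub_pos.2 hu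
  calc ‖(s ^ a - u ^ a) * (u - s) ^ a‖ = |s ^ a - u ^ a| * (u - s) ^ a := by
        rw [Real.norm_eq_abs, abs_mul, abs_of_pos (Real.rpow_pos_of_pos hu₀ _)]
    _ ≤ -a * s ^ (a - 1) * (u - s) * (u - s) ^ a := by
        gcongr; exact abs_rpow_sub_rpow_le hs ha₀ hu.le
    _ = -a * s ^ (a - 1) * (u - s) ^ (a + 1) := by
        rw [Real.rpow_add_one hu₀.ne']; ring

lemma integral_rpow_sub_rpow_mul_sub_rpow (hs : 0 < s) (ha₁ : -1 < a) (ha₀ : a < 0)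
    (hst : s < t) :
    ∫ u in s..t, (s ^ a - u ^ a) * (u - s) ^ (a - 1)
      = (s ^ a - t ^ a) * (t - s) ^ a / a + ∫ u in s..t, u ^ (a - 1) * (u - s) ^ a := by
  have hderiv : ∀ u ∈ Ioo s t, HasDerivAt (fun u => (s ^ a - u ^ a) * (u - s) ^ a)
      (a * ((s ^ a - u ^ a) * (u - s) ^ (a - 1)) - a * (u ^ (a - 1) * (u - s) ^ a)) u := by
    intro u hu
    have h₁ := (Real.hasDerivAt_rpow_const (p := a) (Or.inl (hs.trans hu.1).ne')).const_sub
      (s ^ a)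
    have h₂ := ((hasDerivAt_id' u).sub_const s).rpow_const (p := a)
      (Or.inl (sub_pos.2 hu.1).ne')
    exact (h₁.mul h₂).congr_deriv (by ring)
  have hint₁ :=
    (intervalIntegrable_rpow_sub_rpow_mul_sub_rpow hs ha₁ ha₀.le hst.le).const_mul a
  have hint₂ := (intervalIntegrable_rpow_mul_sub_rpow hs ha₁ hst.le (a - 1)).const_mul a
  have hcont : ContinuousAt (fun u => (s ^ a - u ^ a) * (u - s) ^ a) t :=
    (continuousAt_const.sub (continuousAt_id.rpow_const (Or.inl (hs.trans hst).ne'))).mul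
      ((continuousAt_id.sub continuousAt_const).rpow_const (Or.inl (sub_pos.2 hst).ne'))
  have hftc := intervalIntegral.integral_eq_sub_of_hasDerivAt_of_tendsto hst hderiv
    (hint₁.sub hint₂) (tendsto_rpow_sub_rpow_mul_sub_rpow_nhdsGT hs ha₁ ha₀.le)
    (hcont.tendsto.mono_left nhdsWithin_le_nhds)
  rw [intervalIntegral.integral_sub hint₁ hint₂, intervalIntegral.integral_const_mul,
    intervalIntegral.integral_const_mul, sub_zero] at hftc
  refine eq_add_of_sub_eq ?_
  rw [eq_div_iff ha₀.ne]
  linear_combination hftc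

lemma integral_sub_rpow_sub_one (ha : a ≠ 0) (hst : s < t) {T : ℝ} (htT : t ≤ T) :
    ∫ u in t..T, (u - s) ^ (a - 1) = ((T - s) ^ a - (t - s) ^ a) / a := by
  have hzero : (0 : ℝ) ∉ uIcc (t - s) (T - s) := by
    rw [uIcc_of_le (by linarith)]
    exact fun h => by linarith [h.1]
  rw [intervalIntegral.integral_comp_sub_right (fun u => u ^ (a - 1)),
    integral_rpow (Or.inr ⟨by simpa using ha, hzero⟩), sub_add_cancel]

lemma fracDerRight_rpow_mul_indicator_Icc (ha₁ : -1 < a) (ha₀ : a < 0) (hs : 0 < s)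
    (hst : s < t) {T : ℝ} (htT : t ≤ T) :
    fracDerRight T (-a) (fun u => u ^ a * (Icc 0 t).indicator (fun _ => 1) u) s
      = (t ^ a * (t - s) ^ a - a * ∫ u in Ioo s t, u ^ (a - 1) * (u - s) ^ a)
          / Real.Gamma (1 + a) := by
  set g : ℝ → ℝ := fun u =>
    (s ^ a - u ^ a * (Icc 0 t).indicator (fun _ => 1) u) / (u - s) ^ (1 + -a)
  have hg_left : EqOn g (fun u => (s ^ a - u ^ a) * (u - s) ^ (a - 1)) (Ioo s t) := by
    intro u hu
    simp only [g, indicator_of_mem (show u ∈ Icc 0 t from ⟨(hs.trans hu.1).le, hu.2.le⟩)]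
    rw [div_eq_mul_inv, ← Real.rpow_neg (sub_pos.2 hu.1).le]
    ring_nf
  have hg_right : EqOn g (fun u => s ^ a * (u - s) ^ (a - 1)) (Ioo t T) := by
    intro u hu
    simp only [g, indicator_of_notMem (show u ∉ Icc 0 t from fun h => hu.1.not_ge h.2)]
    rw [div_eq_mul_inv, ← Real.rpow_neg (sub_pos.2 (hst.trans hu.1)).le]
    ring_nf
  have hint_left : IntervalIntegrable g volume s t :=
    (intervalIntegrable_rpow_sub_rpow_mul_sub_rpow hs ha₁ ha₀.le hst.le).congr_uIoo
      (uIoo_of_le hst.le ▸ hg_left.symm)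
  have hint_right : IntervalIntegrable g volume t T := by
    refine (ContinuousOn.intervalIntegrable ?_).congr_uIoo (uIoo_of_le htT ▸ hg_right.symm)
    rw [uIcc_of_le htT]
    exact fun u hu => (continuousAt_const.mul
      ((continuousAt_id.sub continuousAt_const).rpow_const
        (Or.inl (sub_pos.2 (hst.trans_le hu.1)).ne'))).continuousWithinAt
  have hsplit : ∫ u in Ioo s T, g u
      = (∫ u in s..t, (s ^ a - u ^ a) * (u - s) ^ (a - 1))
        + s ^ a * ∫ u in t..T, (u - s) ^ (a - 1) := by
    rw [← integral_Ioc_eq_integral_Ioo, ← intervalIntegral.integral_of_le (hst.le.trans htT),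
      ← intervalIntegral.integral_add_adjacent_intervals hint_left hint_right,
      intervalIntegral.integral_congr_Ioo_of_le hst.le hg_left,
      intervalIntegral.integral_congr_Ioo_of_le htT hg_right, intervalIntegral.integral_const_mul]
  simp only [fracDerRight, indicator_of_mem (show s ∈ Icc 0 t from ⟨hs.le, hst.le⟩), mul_one]
  rw [hsplit, integral_rpow_sub_rpow_mul_sub_rpow hs ha₁ ha₀ hst,
    integral_sub_rpow_sub_one ha₀.ne hst htT, intervalIntegral.integral_of_le hst.le,
    integral_Ioc_eq_integral_Ioo, sub_neg_eq_add, Real.rpow_neg (sub_pos.2 (hst.trans_le htT)).le]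
  have ha : a ≠ 0 := ha₀.ne
  field_simp
  ring

end

/-- For `H ∈ (0,1/2)` and `0 < s < t ≤ T`, the transfer operator applied to the
indicator of `[0,t]` reproduces the fBm kernel: `K(1_{[0,t]})(s) = K_H(t,s)`. -/
theorem stmt_2 (H T s t : ℝ) (hH : H ∈ Set.Ioo (0 : ℝ) (1 / 2))
    (hs : 0 < s) (hst : s < t) (htT : t ≤ T) :
    Kop T H (Set.indicator (Set.Icc 0 t) (fun _ => 1)) s = fbmKernel H t s := by
  obtain ⟨hH₀, hH₁⟩ := hH
  have hΓ : Real.Gamma (H + 1 / 2) ≠ 0 := (Real.Gamma_pos_of_pos (by linarith)).ne'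
  rw [Kop, fbmKernel, show 1 / 2 - H = -(H - 1 / 2) by ring,
    fracDerRight_rpow_mul_indicator_Icc (by linarith) (by linarith) hs hst htT,
    show 1 + (H - 1 / 2) = H + 1 / 2 by ring, show H - 3 / 2 = H - 1 / 2 - 1 by ring,
    Real.div_rpow (hs.trans hst).le hs.le, Real.rpow_neg hs.le]
  field_simp
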